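/- Let M be a Hermitian 4×4 complex matrix satisfying the six orthogonality-preservation conditions ⟨ψ_i|(M ⊗ I)|ψ_j⟩ = 0 for all i ≠ j, where {|ψ_1⟩,...,|ψ_4⟩} = {|ψ_{00}⟩, |ψ_{11}⟩, |ψ_{31}⟩, |ψ_{32}⟩} are generalized Bell states in ℂ^4 ⊗ ℂ^4. Then there exist real numbers a_0, a_1, a_2, b_0, b_2 such that M = [[a_0+a_1+a_2, 0, b_0+b_2, 0], [0, a_0+a_1−a_2, 0, b_0−b_2], [b_0+b_2, 0, a_0−a_1−a_2, 0], [0, b_0−b_2, 0, a_0−a_1+a_2]] with respect to the standard basis. -/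

import Mathlib

open Matrix
open scoped Kronecker

/-- The generalized Bell state `|ψ_{nm}⟩ = (1/√d) ∑_j e^{2πijn/d} |j⟩ ⊗ |j ⊕_d m⟩`. -/
noncomputable def bell (d : ℕ) (n m : Fin d) : Fin d × Fin d → ℂ :=
  fun p => (1 / Real.sqrt d) *
    Complex.exp (2 * Real.pi * Complex.I * (p.1 : ℕ) * (n : ℕ) / d) *
    (if p.2 = p.1 + m then 1 else 0)

/-- The indices of the four Bell states `ψ_{00}, ψ_{11}, ψ_{31}, ψ_{32}` in `ℂ⁴ ⊗ ℂ⁴`. -/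
def bellIdx : Fin 4 → Fin 4 × Fin 4 := ![(0, 0), (1, 1), (3, 1), (3, 2)]

/-! Because `M ⊗ I` acts on the first factor only and `ψ_{nm}` is supported on the pairs
`(a, a + m)`, the matrix element `⟨ψ_{nm}|(M ⊗ I)|ψ_{n'm'}⟩` collapses to a single sum
`(1/d) ∑ₐ ω^{n'(a+m-m') - na} M_{a, a+m-m'}` along the `(m - m')`-th cyclic diagonal of `M`.
For the four given states the six conditions are thus linear equations in the entries of `M`:
four of them kill the odd cyclic diagonals, `⟨ψ_{11}|(M ⊗ I)|ψ_{31}⟩ = 0` makes the alternating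
trace vanish, and `⟨ψ_{00}|(M ⊗ I)|ψ_{32}⟩ = 0` together with hermiticity makes `M₀₂` and `M₁₃`
real. -/

lemma kroneckerMap_one_mulVec_apply {R ι κ : Type*} [NonAssocSemiring R] [Fintype ι] [Fintype κ]
    [DecidableEq κ] (M : Matrix ι ι R) (v : ι × κ → R) (p : ι × κ) :
    ((M ⊗ₖ (1 : Matrix κ κ R)) *ᵥ v) p = ∑ j, M p.1 j * v (j, p.2) := by
  simp [mulVec, dotProduct, Fintype.sum_prod_type, one_apply]

lemma bell_apply_of_ne {d : ℕ} {n m : Fin d} {p : Fin d × Fin d} (h : p.2 ≠ p.1 + m) :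
    bell d n m p = 0 := by
  simp [bell, h]

lemma star_bell_dotProduct_kronecker_one_mulVec_bell {d : ℕ} [NeZero d] (M : Matrix (Fin d) (Fin d) ℂ)
    (n m n' m' : Fin d) :
    star (bell d n m) ⬝ᵥ ((M ⊗ₖ (1 : Matrix (Fin d) (Fin d) ℂ)) *ᵥ bell d n' m') =
      ∑ a, star (bell d n m (a, a + m)) * M a (a + m - m') * bell d n' m' (a + m - m', a + m) := by
  rw [dotProduct, Fintype.sum_prod_type]
  refine Finset.sum_congr rfl fun a _ => ?_
  rw [Finset.sum_eq_single (a + m)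
      (fun b _ hb => by rw [Pi.star_apply, bell_apply_of_ne hb, star_zero, zero_mul])
      (by simp), kroneckerMap_one_mulVec_apply,
    Finset.sum_eq_single (a + m - m')
      (fun j _ hj => by
        rw [bell_apply_of_ne fun h => hj (by simp only at h; rw [h, add_sub_cancel_right]),
          mul_zero])
      (by simp)]
  simp [mul_assoc]

lemma bell_four_apply_add (n m a : Fin 4) :
    bell 4 n m (a, a + m) = Complex.I ^ ((a : ℕ) * n) / 2 := by
  have hexp : (2 * Real.pi * Complex.I * (a : ℕ) * (n : ℕ) / (4 : ℕ) : ℂ) =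
      ((a : ℕ) * (n : ℕ) : ℕ) * (Real.pi / 2 * Complex.I) := by
    push_cast; ring
  have hsqrt : Real.sqrt (4 : ℕ) = 2 := by
    rw [show ((4 : ℕ) : ℝ) = 2 ^ 2 by norm_num, Real.sqrt_sq zero_le_two]
  simp only [bell, hexp, Complex.exp_nat_mul, Complex.exp_pi_div_two_mul_I, hsqrt]
  push_cast; ring

lemma star_bell_four_dotProduct_kronecker_one_mulVec_bell (M : Matrix (Fin 4) (Fin 4) ℂ)
    (n m n' m' : Fin 4) :
    star (bell 4 n m) ⬝ᵥ ((M ⊗ₖ (1 : Matrix (Fin 4) (Fin 4) ℂ)) *ᵥ bell 4 n' m') =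
      (∑ a : Fin 4, (-Complex.I) ^ ((a : ℕ) * n) * M a (a + m - m') *
        Complex.I ^ (((a + m - m' : Fin 4) : ℕ) * n')) / 4 := by
  rw [star_bell_dotProduct_kronecker_one_mulVec_bell, Finset.sum_div]
  refine Finset.sum_congr rfl fun a _ => ?_
  have h := bell_four_apply_add n' m' (a + m - m')
  rw [sub_add_cancel] at h
  rw [h, bell_four_apply_add]
  simp only [star_div₀, star_pow, RCLike.star_def, Complex.conj_I, star_ofNat]
  ring

lemma im_eq_zero_of_star_sub_add_I_mul_sub_star {z w : ℂ}
    (h : star z - z + Complex.I * (w - star w) = 0) : z.im = 0 ∧ w.im = 0 := by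
  have him : -z.im - z.im = 0 := by simpa using congrArg Complex.im h
  exact ⟨by linarith, by simpa using congrArg Complex.re h⟩

lemma exists_form_of_isHermitian {M : Matrix (Fin 4) (Fin 4) ℂ} (hM : M.IsHermitian)
    (h10 : M 1 0 = 0) (h21 : M 2 1 = 0) (h32 : M 3 2 = 0) (h03 : M 0 3 = 0)
    (h02 : (M 0 2).im = 0) (h13 : (M 1 3).im = 0)
    (hdiag : M 0 0 - M 1 1 + M 2 2 - M 3 3 = 0) :
    ∃ a0 a1 a2 b0 b2 : ℝ,
      M = !![((a0 + a1 + a2 : ℝ) : ℂ), 0, ((b0 + b2 : ℝ) : ℂ), 0;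
             0, ((a0 + a1 - a2 : ℝ) : ℂ), 0, ((b0 - b2 : ℝ) : ℂ);
             ((b0 + b2 : ℝ) : ℂ), 0, ((a0 - a1 - a2 : ℝ) : ℂ), 0;
             0, ((b0 - b2 : ℝ) : ℂ), 0, ((a0 - a1 + a2 : ℝ) : ℂ)] := by
  obtain ⟨x, hx⟩ : ∃ x : Fin 4 → ℝ, ∀ i, M i i = x i :=
    ⟨_, fun i => (hM.coe_re_apply_self i).symm⟩
  obtain ⟨y, hy⟩ : ∃ y : ℝ, M 0 2 = y := ⟨(M 0 2).re, Complex.ext rfl (by simp [h02])⟩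
  obtain ⟨y', hy'⟩ : ∃ y' : ℝ, M 1 3 = y' := ⟨(M 1 3).re, Complex.ext rfl (by simp [h13])⟩
  have hstar {i j : Fin 4} {z : ℂ} (h : M i j = z) : M j i = star z := by rw [← hM.apply, h]
  have hx3 : x 3 = x 0 - x 1 + x 2 := by
    rw [hx, hx, hx, hx] at hdiag
    exact_mod_cast (by linear_combination -hdiag : (x 3 : ℂ) = x 0 - x 1 + x 2)
  refine ⟨(x 0 + x 2) / 2, (x 1 - x 2) / 2, (x 0 - x 1) / 2, (y + y') / 2, (y - y') / 2, ?_⟩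
  ext i j
  fin_cases i <;> fin_cases j <;>
    simp [hx, hx3, hy, hy', hstar hy, hstar hy', h10, h21, h32, h03, hstar h10, hstar h21,
      hstar h32, hstar h03] <;> ring

lemma bell_orthogonality_relations (M : Matrix (Fin 4) (Fin 4) ℂ)
    (hOP : ∀ i j : Fin 4, i ≠ j →
      star (bell 4 (bellIdx i).1 (bellIdx i).2) ⬝ᵥ
        ((M ⊗ₖ (1 : Matrix (Fin 4) (Fin 4) ℂ)).mulVec
          (bell 4 (bellIdx j).1 (bellIdx j).2)) = 0) :
    M 1 0 = 0 ∧ M 2 1 = 0 ∧ M 3 2 = 0 ∧ M 0 3 = 0 ∧ M 0 0 - M 1 1 + M 2 2 - M 3 3 = 0 ∧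
      M 2 0 - M 0 2 + Complex.I * (M 1 3 - M 3 1) = 0 := by
  have h01 := hOP 0 1 (by decide)
  have h02 := hOP 0 2 (by decide)
  have h03 := hOP 0 3 (by decide)
  have h12 := hOP 1 2 (by decide)
  have h13 := hOP 1 3 (by decide)
  have h23 := hOP 2 3 (by decide)
  simp only [bellIdx, star_bell_four_dotProduct_kronecker_one_mulVec_bell] at h01 h02 h03 h12 h13 h23
  simp only [Fin.isValue, cons_val_zero, Fin.coe_ofNat_eq_mod, Nat.zero_mod, mul_zero, pow_zero,
    add_zero, cons_val_one, one_mul, Nat.one_mod, mul_one, Fin.sum_univ_four, zero_sub,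
    show (-1 : Fin 4) = 3 from rfl, show (-2 : Fin 4) = 2 from rfl, Nat.mod_succ,
    Complex.I_pow_three, mul_neg, sub_self, Fin.reduceSub, pow_one, Nat.reduceMod, Complex.I_sq,
    div_eq_zero_iff, OfNat.ofNat_ne_zero, or_false, cons_val, Nat.reduceMul,
    Complex.I_pow_eq_pow_mod', zero_mul, neg_pow Complex.I, add_sub_cancel_right, neg_mul, neg_neg,
    even_two, Even.neg_pow, one_pow, zero_add, Fin.reduceAdd] at h01 h02 h03 h12 h13 h23
  -- With `(a, b, c, e) = (M 0 3, M 1 0, M 2 1, M 3 2)`, `h01, h02` say `b - e ∓ i (a - c) = 0`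
  -- and `h13, h23` say `i (a ∓ b + c ∓ e) = 0`.
  have hI := Complex.I_sq
  refine ⟨?_, ?_, ?_, ?_, ?_, by linear_combination h03⟩
  · linear_combination (h01 + h02 - Complex.I * (h23 - h13)) / 4 + (M 1 0 + M 3 2) / 2 * hI
  · linear_combination -Complex.I / 4 * (h13 + h23 - h02 + h01) + M 2 1 * hI
  · linear_combination (-(h01 + h02) - Complex.I * (h23 - h13)) / 4 + (M 1 0 + M 3 2) / 2 * hI
  · linear_combination -Complex.I / 4 * (h02 - h01 + h13 + h23) + M 0 3 * hI
  · linear_combination h12 - (M 1 1 + M 3 3) * hI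

/-- If a Hermitian `4×4` matrix `M` satisfies the six orthogonality-preservation
conditions `⟨ψ_i|(M ⊗ I)|ψ_j⟩ = 0` for `i ≠ j` among `ψ_{00}, ψ_{11}, ψ_{31}, ψ_{32}`,
then `M` has the stated five-parameter real form. -/
theorem op_condition_forces_form (M : Matrix (Fin 4) (Fin 4) ℂ)
    (hM : M.IsHermitian)
    (hOP : ∀ i j : Fin 4, i ≠ j →
      star (bell 4 (bellIdx i).1 (bellIdx i).2) ⬝ᵥ
        ((M ⊗ₖ (1 : Matrix (Fin 4) (Fin 4) ℂ)).mulVec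
          (bell 4 (bellIdx j).1 (bellIdx j).2)) = 0) :
    ∃ a0 a1 a2 b0 b2 : ℝ,
      M = !![((a0 + a1 + a2 : ℝ) : ℂ), 0, ((b0 + b2 : ℝ) : ℂ), 0;
             0, ((a0 + a1 - a2 : ℝ) : ℂ), 0, ((b0 - b2 : ℝ) : ℂ);
             ((b0 + b2 : ℝ) : ℂ), 0, ((a0 - a1 - a2 : ℝ) : ℂ), 0;
             0, ((b0 - b2 : ℝ) : ℂ), 0, ((a0 - a1 + a2 : ℝ) : ℂ)] := by
  obtain ⟨h10, h21, h32, h03, hdiag, h02⟩ := bell_orthogonality_relations M hOP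
  obtain ⟨h02_im, h13_im⟩ : (M 0 2).im = 0 ∧ (M 1 3).im = 0 :=
    im_eq_zero_of_star_sub_add_I_mul_sub_star (by rw [hM.apply, hM.apply]; linear_combination h02)
  exact exists_form_of_isHermitian hM h10 h21 h32 h03 h02_im h13_im hdiag
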